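/- Let k ≥ 3 and let m,n ≥ 1 be integers with m+n = k. Let P(b,x) = Σ_{i=1}^{k−1} γ_i b^i x^{k−i} with γ_m = 1, and let f ∈ ℝ[[a,b,x]] be a nonzero formal power series all of whose monomials a^s b^i x^j have weighted order ks + i + j > k (weights: a ↦ k, b ↦ 1, x ↦ 1). Then the vector field χ = n b ∂_b − m x ∂_x is tangent to the hypersurface y = a + P(b,x) + f(a,b,x), i.e. n b ∂_b(P+f) = m x ∂_x(P+f) holds identically, if and only if P(b,x) = b^m x^n and every monomial a^s b^i x^j occurring in f satisfies n i = m j (so that, when gcd(m,n) = 1, the expansion of f with respect to b and x consists of monomials of the type (b^m x^n)^r). -/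

import Mathlib

/- Tangency of χ = n b ∂_b − m x ∂_x to the hypersurface y = a + P(b,x) + f.
   Formal series live in ℝ[[a,b,x]] = `MvPowerSeries (Fin 3) ℝ`
   (a ↦ 0, b ↦ 1, x ↦ 2). -/

open MvPowerSeries

/-- Formal partial derivative with respect to the variable `b` (index 1). -/
noncomputable def dB (g : MvPowerSeries (Fin 3) ℝ) : MvPowerSeries (Fin 3) ℝ :=
  fun d => ((d 1 : ℝ) + 1) * MvPowerSeries.coeff (R := ℝ) (d + Finsupp.single 1 1) g

/-- Formal partial derivative with respect to the variable `x` (index 2). -/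
noncomputable def dX (g : MvPowerSeries (Fin 3) ℝ) : MvPowerSeries (Fin 3) ℝ :=
  fun d => ((d 2 : ℝ) + 1) * MvPowerSeries.coeff (R := ℝ) (d + Finsupp.single 2 1) g

/-! The Euler operators `b ∂_b` and `x ∂_x` act diagonally on monomials, multiplying
`a^s b^i x^j` by `i` and by `j`, so tangency says exactly that every monomial of `P + f`
satisfies `n i = m j`. All monomials of `P` have weight `k` while those of `f` have weight
`> k`, so the supports are disjoint and the condition splits into one on `P` and one on `f`.
On `b^i x^(k-i)` the equation `n i = m (k - i)` forces `i = m`, hence `P = γ_m b^m x^n`. -/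

open Finsupp

namespace MvPowerSeries

variable {σ R : Type*}

theorem coeff_X_mul_pderiv [CommSemiring R] (i : σ) (g : MvPowerSeries σ R) (d : σ →₀ ℕ) :
    coeff d (X i * pderiv R i g) = d i * coeff d g := by
  rcases Nat.eq_zero_or_pos (d i) with h | h
  · rw [X, coeff_monomial_mul, if_neg (by simp [single_le_iff, h]), h, Nat.cast_zero, zero_mul]
  · obtain ⟨e, rfl⟩ : ∃ e, d = single i 1 + e := exists_add_of_le (single_le_iff.mpr h)
    rw [X, coeff_add_monomial_mul, one_mul, coeff_pderiv, add_comm e]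
    simp [add_comm, mul_comm]

theorem smul_X_mul_pderiv_eq_iff [CommRing R] [IsDomain R] (a b : R) (i j : σ)
    (g : MvPowerSeries σ R) :
    a • (X i * pderiv R i g) = b • (X j * pderiv R j g) ↔
      ∀ d, coeff d g ≠ 0 → a * d i = b * d j := by
  rw [MvPowerSeries.ext_iff]
  refine forall_congr' fun d => ?_
  rw [coeff_smul, coeff_smul, coeff_X_mul_pderiv, coeff_X_mul_pderiv, ← mul_assoc, ← mul_assoc,
    mul_eq_mul_right_iff, or_iff_not_imp_right]

theorem forall_coeff_add_ne_zero_iff [Semiring R] {g h : MvPowerSeries σ R}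
    (hdisj : ∀ d, coeff d h ≠ 0 → coeff d g = 0) (Q : (σ →₀ ℕ) → Prop) :
    (∀ d, coeff d (g + h) ≠ 0 → Q d) ↔
      (∀ d, coeff d g ≠ 0 → Q d) ∧ (∀ d, coeff d h ≠ 0 → Q d) := by
  refine ⟨fun hQ => ⟨fun d hg => hQ d ?_, fun d hh => hQ d ?_⟩,
    fun ⟨hQg, hQh⟩ d hgh => ?_⟩
  · have : coeff d h = 0 := by_contra fun hh => hg (hdisj d hh)
    rwa [map_add, this, add_zero]
  · rwa [map_add, hdisj d hh, zero_add]
  · rw [map_add] at hgh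
    by_cases hg : coeff d g = 0
    · exact hQh d (by rwa [hg, zero_add] at hgh)
    · exact hQg d hg

end MvPowerSeries

theorem dB_eq_pderiv (g : MvPowerSeries (Fin 3) ℝ) : dB g = pderiv ℝ 1 g := by
  ext d
  rw [coeff_pderiv, mul_comm]
  rfl

theorem dX_eq_pderiv (g : MvPowerSeries (Fin 3) ℝ) : dX g = pderiv ℝ 2 g := by
  ext d
  rw [coeff_pderiv, mul_comm]
  rfl

theorem smul_X_mul_dB_eq_iff (m n : ℕ) (g : MvPowerSeries (Fin 3) ℝ) :
    (n : ℝ) • (X 1 * dB g) = (m : ℝ) • (X 2 * dX g) ↔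
      ∀ d, coeff d g ≠ 0 → n * d 1 = m * d 2 := by
  rw [dB_eq_pderiv, dX_eq_pderiv, smul_X_mul_pderiv_eq_iff]
  exact_mod_cast Iff.rfl

noncomputable def binaryForm (k : ℕ) (γ : ℕ → ℝ) : MvPowerSeries (Fin 3) ℝ :=
  ∑ i ∈ Finset.Icc 1 (k - 1), monomial (single 1 i + single 2 (k - i)) (γ i)

section binaryForm

variable {k : ℕ} {γ : ℕ → ℝ}

theorem exists_eq_of_coeff_binaryForm_ne_zero {d : Fin 3 →₀ ℕ}
    (hd : coeff d (binaryForm k γ) ≠ 0) :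
    ∃ i ∈ Finset.Icc 1 (k - 1), d = single 1 i + single 2 (k - i) := by
  rw [binaryForm, map_sum] at hd
  obtain ⟨i, hi, hne⟩ := Finset.exists_ne_zero_of_sum_ne_zero hd
  exact ⟨i, hi, by_contra fun h => hne (by rw [coeff_monomial, if_neg h])⟩

theorem coeff_binaryForm_of_lt_weight {d : Fin 3 →₀ ℕ} (hd : k < k * d 0 + d 1 + d 2) :
    coeff d (binaryForm k γ) = 0 := by
  by_contra h
  obtain ⟨i, hi, rfl⟩ := exists_eq_of_coeff_binaryForm_ne_zero h
  rw [Finset.mem_Icc] at hi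
  simp only [coe_add, Pi.add_apply, single_eq_same, single_eq_of_ne, ne_eq, Fin.reduceEq,
    not_false_eq_true, add_zero, zero_add, mul_zero] at hd
  omega

theorem coeff_binaryForm_of_mem {i : ℕ} (hi : i ∈ Finset.Icc 1 (k - 1)) :
    coeff (single 1 i + single 2 (k - i)) (binaryForm k γ) = γ i := by
  rw [binaryForm, map_sum, Finset.sum_eq_single_of_mem i hi, coeff_monomial_same]
  intro j _ hji
  rw [coeff_monomial, if_neg]
  intro h
  exact hji (by simpa using congr($h 1).symm)

theorem forall_coeff_binaryForm_ne_zero_iff {m n : ℕ} (hm : 1 ≤ m) (hn : 1 ≤ n)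
    (hmn : m + n = k) (hγm : γ m = 1) :
    (∀ d, coeff d (binaryForm k γ) ≠ 0 → n * d 1 = m * d 2) ↔
      binaryForm k γ = monomial (single 1 m + single 2 n) 1 := by
  refine ⟨fun h => ?_, fun h d hd => ?_⟩
  · have hγ : ∀ i ∈ Finset.Icc 1 (k - 1), i ≠ m → γ i = 0 := by
      intro i hi him
      by_contra hγi
      have hnim : n * i = m * (k - i) := by
        have := h (single 1 i + single 2 (k - i)) (by rwa [coeff_binaryForm_of_mem hi])
        simpa [-single_tsub] using this
      have hik : i ≤ k := (Finset.mem_Icc.mp hi).2.trans (Nat.sub_le k 1)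
      refine him (Nat.eq_of_mul_eq_mul_left (by omega : 0 < k) ?_)
      calc k * i = m * i + n * i := by rw [← hmn, add_mul]
        _ = m * k := by rw [hnim, ← mul_add, Nat.add_sub_cancel' hik]
        _ = k * m := mul_comm m k
    have hmem : m ∈ Finset.Icc 1 (k - 1) := Finset.mem_Icc.mpr ⟨hm, by omega⟩
    rw [binaryForm,
      Finset.sum_eq_single_of_mem m hmem fun i hi him => by rw [hγ i hi him, map_zero],
      hγm, show k - m = n by omega]
  · rw [h] at hd
    obtain rfl := eq_of_coeff_monomial_ne_zero hd
    simp [mul_comm]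

end binaryForm

theorem stmt9_general (k m n : ℕ) (hm : 1 ≤ m) (hn : 1 ≤ n)
    (hmn : m + n = k) (γ : ℕ → ℝ) (hγm : γ m = 1)
    (f : MvPowerSeries (Fin 3) ℝ)
    (hford : ∀ d, MvPowerSeries.coeff (R := ℝ) d f ≠ 0 → k < k * d 0 + d 1 + d 2) :
    (let P : MvPowerSeries (Fin 3) ℝ :=
      ∑ i ∈ Finset.Icc 1 (k - 1),
        MvPowerSeries.monomial (R := ℝ) (Finsupp.single 1 i + Finsupp.single 2 (k - i)) (γ i)
     ((n : ℝ) • ((X 1 : MvPowerSeries (Fin 3) ℝ) * dB (P + f)) =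
        (m : ℝ) • ((X 2 : MvPowerSeries (Fin 3) ℝ) * dX (P + f))) ↔
      (P = MvPowerSeries.monomial (R := ℝ) (Finsupp.single 1 m + Finsupp.single 2 n) 1 ∧
        ∀ d, MvPowerSeries.coeff (R := ℝ) d f ≠ 0 → n * d 1 = m * d 2)) := by
  intro P
  have hP : P = binaryForm k γ := rfl
  rw [hP, smul_X_mul_dB_eq_iff,
    forall_coeff_add_ne_zero_iff fun d hd => coeff_binaryForm_of_lt_weight (hford d hd),
    forall_coeff_binaryForm_ne_zero_iff hm hn hmn hγm]

/-- Let `k = m + n ≥ 3` with `m, n ≥ 1`, let `P = Σ_{i=1}^{k−1} γ_i b^i x^{k−i}`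
with `γ_m = 1`, and let `f` be a nonzero formal power series all of whose
monomials `a^s b^i x^j` have weighted order `ks + i + j > k`.  Then
`χ = n b ∂_b − m x ∂_x` is tangent to `y = a + P + f`, i.e.
`n·b·∂_b(P+f) = m·x·∂_x(P+f)`, if and only if `P = b^m x^n` and every monomial
`a^s b^i x^j` of `f` satisfies `n i = m j`. -/
theorem stmt9 (k m n : ℕ) (hk : 3 ≤ k) (hm : 1 ≤ m) (hn : 1 ≤ n)
    (hmn : m + n = k) (γ : ℕ → ℝ) (hγm : γ m = 1)
    (f : MvPowerSeries (Fin 3) ℝ) (hf0 : f ≠ 0)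
    (hford : ∀ d, MvPowerSeries.coeff (R := ℝ) d f ≠ 0 → k < k * d 0 + d 1 + d 2) :
    (let P : MvPowerSeries (Fin 3) ℝ :=
      ∑ i ∈ Finset.Icc 1 (k - 1),
        MvPowerSeries.monomial (R := ℝ) (Finsupp.single 1 i + Finsupp.single 2 (k - i)) (γ i)
     ((n : ℝ) • ((X 1 : MvPowerSeries (Fin 3) ℝ) * dB (P + f)) =
        (m : ℝ) • ((X 2 : MvPowerSeries (Fin 3) ℝ) * dX (P + f))) ↔
      (P = MvPowerSeries.monomial (R := ℝ) (Finsupp.single 1 m + Finsupp.single 2 n) 1 ∧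
        ∀ d, MvPowerSeries.coeff (R := ℝ) d f ≠ 0 → n * d 1 = m * d 2)) :=
  stmt9_general k m n hm hn hmn γ hγm f hford
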